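/- arXiv:1512.01796 — 5 statements merged into one kernel-verified Lean document; each statement's English description precedes it below -/
import Mathlib

section
/- The function g(x,y) = ((1-x-y)/(x+y))·((1-y)/y) is strictly convex on the set C_g = {(x,y) : x>0, y>0, x+y<1, x+2y-xy-y² < 3/4}. -/
/-!
Write `φ t = (1 - t) / t`. Then `g(x, y) = h(x + y, y)` with `h(s, y) = φ s * φ y`, i.e. `g` is
`h` composed with an injective linear shear. The Hessian of `h` is `[[φ'' s φ y, φ' s φ' y], [φ' s φ' y, φ s φ'' y]]`,
with determinant `(4 (1 - s) (1 - y) - 1) / (s⁴ y⁴)`, and `4 (1 - s) (1 - y) > 1` is exactly the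
condition `x + 2y - xy - y² < 3/4`. So `h` is strictly convex along every segment of the sheared
domain, which is convex because `{u > 0, v > 0, u v > 1/4}` is.
-/

open Set Filter Topology

section

variable {𝕜 E F β : Type*}

theorem StrictConvexOn.comp_linearMap [Semiring 𝕜] [PartialOrder 𝕜] [AddCommMonoid E]
    [AddCommMonoid F] [Module 𝕜 E] [Module 𝕜 F] [AddCommMonoid β] [PartialOrder β] [SMul 𝕜 β]
    {f : F → β} {s : Set F} (hf : StrictConvexOn 𝕜 s f) {g : E →ₗ[𝕜] F}
    (hg : Function.Injective g) : StrictConvexOn 𝕜 (g ⁻¹' s) (f ∘ g) :=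
  ⟨hf.1.linear_preimage _, fun x hx y hy hxy a b ha hb hab =>
    calc
      f (g (a • x + b • y)) = f (a • g x + b • g y) := by rw [g.map_add, g.map_smul, g.map_smul]
      _ < a • f (g x) + b • f (g y) := hf.2 hx hy (hg.ne hxy) ha hb hab⟩

theorem strictConvexOn_of_comp_lineMap [Ring 𝕜] [PartialOrder 𝕜] [IsOrderedRing 𝕜]
    [Nontrivial 𝕜] [AddCommGroup E] [Module 𝕜 E] [AddCommMonoid β] [PartialOrder β] [SMul 𝕜 β]
    {s : Set E} {f : E → β} (hs : Convex 𝕜 s)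
    (hf : ∀ x ∈ s, ∀ y ∈ s, x ≠ y →
      StrictConvexOn 𝕜 (Icc (0 : 𝕜) 1) (f ∘ AffineMap.lineMap x y)) :
    StrictConvexOn 𝕜 s f := by
  refine ⟨hs, fun x hx y hy hxy a b ha hb hab => ?_⟩
  have h := (hf x hx y hy hxy).2 (left_mem_Icc.2 zero_le_one) (right_mem_Icc.2 zero_le_one)
    zero_ne_one ha hb hab
  obtain rfl : a = 1 - b := eq_sub_of_add_eq hab
  simpa [AffineMap.lineMap_apply_module] using h

end

theorem quadratic_form_pos_of_discrim_neg {K : Type*} [Field K] [LinearOrder K]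
    [IsStrictOrderedRing K] {a b c u v : K} (ha : 0 < a) (hdisc : discrim a b c < 0)
    (huv : u ≠ 0 ∨ v ≠ 0) : 0 < a * u ^ 2 + b * u * v + c * v ^ 2 := by
  rw [discrim] at hdisc
  rcases eq_or_ne v 0 with rfl | hv
  · have hu := huv.resolve_right (not_not.2 rfl)
    simpa using mul_pos ha (by positivity : 0 < u ^ 2)
  · have hsq : 4 * a * (a * u ^ 2 + b * u * v + c * v ^ 2)
        = (2 * a * u + b * v) ^ 2 + (4 * a * c - b ^ 2) * v ^ 2 := by ring
    have h4 : 0 < 4 * a * (a * u ^ 2 + b * u * v + c * v ^ 2) := by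
      have : 0 < (4 * a * c - b ^ 2) * v ^ 2 := mul_pos (by linarith) (by positivity)
      rw [hsq]
      positivity
    exact pos_of_mul_pos_right h4 (by positivity)

theorem strictConvexOn_mul_of_hessian_posDef {D : Set (ℝ × ℝ)} (hD : Convex ℝ D)
    {f f' f'' g g' g'' : ℝ → ℝ}
    (hf : ∀ p ∈ D, HasDerivAt f (f' p.1) p.1) (hf' : ∀ p ∈ D, HasDerivAt f' (f'' p.1) p.1)
    (hg : ∀ p ∈ D, HasDerivAt g (g' p.2) p.2) (hg' : ∀ p ∈ D, HasDerivAt g' (g'' p.2) p.2)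
    (hpos : ∀ p ∈ D, 0 < f'' p.1 * g p.2)
    (hdisc : ∀ p ∈ D, discrim (f'' p.1 * g p.2) (2 * (f' p.1 * g' p.2)) (f p.1 * g'' p.2) < 0) :
    StrictConvexOn ℝ D (fun p => f p.1 * g p.2) := by
  refine strictConvexOn_of_comp_lineMap hD fun p hp q hq hpq => ?_
  set x : ℝ → ℝ := ⇑(AffineMap.lineMap (k := ℝ) p.1 q.1)
  set y : ℝ → ℝ := ⇑(AffineMap.lineMap (k := ℝ) p.2 q.2)
  have hmem : ∀ t ∈ Icc (0 : ℝ) 1, (x t, y t) ∈ D := fun t ht => by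
    rw [show (x t, y t) = AffineMap.lineMap p q t from
      Prod.ext (AffineMap.fst_lineMap ..).symm (AffineMap.snd_lineMap ..).symm]
    exact hD.lineMap_mem hp hq ht
  have hcomp : (fun p : ℝ × ℝ => f p.1 * g p.2) ∘ AffineMap.lineMap p q
      = fun t => f (x t) * g (y t) := by
    ext t
    simp [x, y, AffineMap.fst_lineMap, AffineMap.snd_lineMap]
  have hx : ∀ t, HasDerivAt x (q.1 - p.1) t := fun t => AffineMap.hasDerivAt_lineMap
  have hy : ∀ t, HasDerivAt y (q.2 - p.2) t := fun t => AffineMap.hasDerivAt_lineMap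
  set F' : ℝ → ℝ := fun t => f' (x t) * (q.1 - p.1) * g (y t) + f (x t) * (g' (y t) * (q.2 - p.2))
  have hF : ∀ t ∈ Icc (0 : ℝ) 1, HasDerivAt (fun t => f (x t) * g (y t)) (F' t) t := fun t ht =>
    ((hf _ (hmem t ht)).comp t (hx t)).mul ((hg _ (hmem t ht)).comp t (hy t))
  have hF' : ∀ t ∈ Icc (0 : ℝ) 1, HasDerivAt F'
      (f'' (x t) * g (y t) * (q.1 - p.1) ^ 2
        + 2 * (f' (x t) * g' (y t)) * (q.1 - p.1) * (q.2 - p.2)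
        + f (x t) * g'' (y t) * (q.2 - p.2) ^ 2) t := fun t ht => by
    have hfx := (hf _ (hmem t ht)).comp t (hx t)
    have hgy := (hg _ (hmem t ht)).comp t (hy t)
    have hfx' := (hf' _ (hmem t ht)).comp t (hx t)
    have hgy' := (hg' _ (hmem t ht)).comp t (hy t)
    exact (((hfx'.mul_const _).mul hgy).add (hfx.mul (hgy'.mul_const _))).congr_deriv
      (by simp only [Function.comp_apply]; ring)
  have huv : q.1 - p.1 ≠ 0 ∨ q.2 - p.2 ≠ 0 := by
    by_contra! h
    exact hpq (Prod.ext (sub_eq_zero.1 h.1).symm (sub_eq_zero.1 h.2).symm)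
  rw [hcomp]
  refine strictConvexOn_of_deriv2_pos (convex_Icc 0 1)
    (fun t ht => (hF t ht).continuousAt.continuousWithinAt) fun t ht => ?_
  rw [interior_Icc] at ht
  have hderiv : deriv (fun t => f (x t) * g (y t)) =ᶠ[𝓝 t] F' :=
    eventually_of_mem (isOpen_Ioo.mem_nhds ht) fun s hs => (hF s (Ioo_subset_Icc_self hs)).deriv
  rw [Function.iterate_succ_apply, Function.iterate_one, hderiv.deriv_eq,
    (hF' t (Ioo_subset_Icc_self ht)).deriv]
  exact quadratic_form_pos_of_discrim_neg (hpos _ (hmem t (Ioo_subset_Icc_self ht)))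
    (hdisc _ (hmem t (Ioo_subset_Icc_self ht))) huv

theorem convex_setOf_lt_mul {c : ℝ} (hc : 0 ≤ c) :
    Convex ℝ {p : ℝ × ℝ | 0 < p.1 ∧ 0 < p.2 ∧ c < p.1 * p.2} := by
  rintro ⟨u₁, v₁⟩ ⟨hu₁, hv₁, h₁⟩ ⟨u₂, v₂⟩ ⟨hu₂, hv₂, h₂⟩ a b ha hb hab
  simp only [mem_ofPred_eq, Prod.smul_mk, Prod.mk_add_mk, smul_eq_mul] at *
  refine ⟨convex_Ioi (0 : ℝ) hu₁ hu₂ ha hb hab, convex_Ioi (0 : ℝ) hv₁ hv₂ ha hb hab, ?_⟩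
  have hcross : 2 * c < u₁ * v₂ + u₂ * v₁ := by
    nlinarith [sq_nonneg (u₁ * v₂ - u₂ * v₁), mul_pos hu₁ hv₂, mul_pos hu₂ hv₁]
  have hsplit : (a * u₁ + b * u₂) * (a * v₁ + b * v₂) - c
      = a ^ 2 * (u₁ * v₁ - c) + b ^ 2 * (u₂ * v₂ - c) + a * b * (u₁ * v₂ + u₂ * v₁ - 2 * c) := by
    linear_combination c * (a + b + 1) * hab
  have hab' : 0 < a ∨ 0 < b := by
    by_contra! h
    linarith [le_antisymm h.1 ha, le_antisymm h.2 hb]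
  rcases hab' with ha' | hb'
  · nlinarith [mul_pos (pow_pos ha' 2) (sub_pos.2 h₁), mul_nonneg (sq_nonneg b) (sub_pos.2 h₂).le,
      mul_nonneg (mul_nonneg ha hb) (sub_pos.2 hcross).le]
  · nlinarith [mul_nonneg (sq_nonneg a) (sub_pos.2 h₁).le, mul_pos (pow_pos hb' 2) (sub_pos.2 h₂),
      mul_nonneg (mul_nonneg ha hb) (sub_pos.2 hcross).le]

theorem hasDerivAt_one_sub_div_self {x : ℝ} (hx : x ≠ 0) :
    HasDerivAt (fun x => (1 - x) / x) (-1 / x ^ 2) x :=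
  (((hasDerivAt_id' x).const_sub 1).div (hasDerivAt_id' x) hx).congr_deriv (by field_simp; ring)

theorem hasDerivAt_neg_one_div_sq {x : ℝ} (hx : x ≠ 0) :
    HasDerivAt (fun x => -1 / x ^ 2) (2 / x ^ 3) x :=
  ((hasDerivAt_const x (-1 : ℝ)).div ((hasDerivAt_id' x).pow 2) (pow_ne_zero 2 hx)).congr_deriv
    (by simp; field_simp)

def shear : ℝ × ℝ →ₗ[ℝ] ℝ × ℝ :=
  (LinearMap.fst ℝ ℝ ℝ + LinearMap.snd ℝ ℝ ℝ).prod (LinearMap.snd ℝ ℝ ℝ)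

theorem shear_apply (p : ℝ × ℝ) : shear p = (p.1 + p.2, p.2) := rfl

theorem shear_injective : Function.Injective shear := by
  intro p q h
  simp only [shear_apply, Prod.mk.injEq] at h
  exact Prod.ext (by linarith) h.2

def shearedDomain : Set (ℝ × ℝ) :=
  {q | 0 < q.2 ∧ q.2 < q.1 ∧ q.1 < 1 ∧ 1 / 4 < (1 - q.1) * (1 - q.2)}

theorem convex_shearedDomain : Convex ℝ shearedDomain := by
  rintro ⟨s₁, y₁⟩ ⟨hy₁, hys₁, hs₁, h₁⟩ ⟨s₂, y₂⟩ ⟨hy₂, hys₂, hs₂, h₂⟩ a b ha hb hab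
  have hgap := convex_Ioi (0 : ℝ) (sub_pos.2 hys₁) (sub_pos.2 hys₂) ha hb hab
  have hprod := convex_setOf_lt_mul (by norm_num : (0 : ℝ) ≤ 1 / 4)
    (x := (1 - s₁, 1 - y₁)) (y := (1 - s₂, 1 - y₂)) ⟨by linarith, by linarith, h₁⟩
    ⟨by linarith, by linarith, h₂⟩ ha hb hab
  simp only [shearedDomain, mem_Ioi, smul_eq_mul, mem_ofPred_eq, Prod.smul_mk,
    Prod.mk_add_mk] at hgap hprod ⊢
  refine ⟨convex_Ioi (0 : ℝ) hy₁ hy₂ ha hb hab, by linarith, convex_Iio (1 : ℝ) hs₁ hs₂ ha hb hab, ?_⟩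
  convert hprod.2.2 using 2 <;> linear_combination -hab

theorem strictConvexOn_shearedDomain :
    StrictConvexOn ℝ shearedDomain (fun q => (1 - q.1) / q.1 * ((1 - q.2) / q.2)) := by
  refine strictConvexOn_mul_of_hessian_posDef convex_shearedDomain
    (f' := fun x => -1 / x ^ 2) (f'' := fun x => 2 / x ^ 3)
    (g' := fun x => -1 / x ^ 2) (g'' := fun x => 2 / x ^ 3)
    (fun q hq => hasDerivAt_one_sub_div_self (hq.1.trans hq.2.1).ne')
    (fun q hq => hasDerivAt_neg_one_div_sq (hq.1.trans hq.2.1).ne')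
    (fun q hq => hasDerivAt_one_sub_div_self hq.1.ne')
    (fun q hq => hasDerivAt_neg_one_div_sq hq.1.ne') ?_ ?_
  · rintro ⟨s, y⟩ ⟨hy, hys, hs, -⟩
    exact mul_pos (div_pos two_pos (pow_pos (hy.trans hys) 3)) (div_pos (by linarith) hy)
  · rintro ⟨s, y⟩ ⟨hy, hys, -, h⟩
    have hs : 0 < s := hy.trans hys
    have hdisc : discrim (2 / s ^ 3 * ((1 - y) / y)) (2 * (-1 / s ^ 2 * (-1 / y ^ 2)))
        ((1 - s) / s * (2 / y ^ 3)) = 16 * (1 / 4 - (1 - s) * (1 - y)) / (s ^ 4 * y ^ 4) := by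
      rw [discrim]
      field_simp
      ring
    rw [hdisc]
    exact div_neg_of_neg_of_pos (by linarith) (by positivity)

/-- The function `g(x,y) = ((1-x-y)/(x+y))·((1-y)/y)` is strictly convex on
`C_g = {(x,y) : x>0, y>0, x+y<1, x+2y-xy-y² < 3/4}`. -/
theorem strictConvexOn_g :
    StrictConvexOn ℝ
      {p : ℝ × ℝ | 0 < p.1 ∧ 0 < p.2 ∧ p.1 + p.2 < 1 ∧
        p.1 + 2 * p.2 - p.1 * p.2 - p.2 ^ 2 < 3 / 4}
      (fun p : ℝ × ℝ => ((1 - p.1 - p.2) / (p.1 + p.2)) * ((1 - p.2) / p.2)) := by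
  convert strictConvexOn_shearedDomain.comp_linearMap shear_injective using 1
  · rfl -- the two scalar actions on `ℝ × ℝ` agree definitionally
  · ext ⟨x, y⟩
    simp only [mem_ofPred_eq, mem_preimage, shear_apply, shearedDomain]
    have hpoly : (1 - (x + y)) * (1 - y) = 1 - (x + 2 * y - x * y - y ^ 2) := by ring
    rw [hpoly]
    constructor
    · rintro ⟨hx, hy, hs, h⟩
      exact ⟨hy, by linarith, hs, by linarith⟩
    · rintro ⟨hy, hyx, hs, h⟩
      exact ⟨by linarith, hy, hs, by linarith⟩
  · funext ⟨x, y⟩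
    simp only [Function.comp_apply, shear_apply]
    ring
end

section
/- The set C_g = {(x,y) : x>0, y>0, x+y<1, x+2y-xy-y² < 3/4} is an open convex subset of ℝ². -/
set_option maxHeartbeats 1600000 in
/-- The set `C_g = {(x,y) : x>0, y>0, x+y<1, x+2y-xy-y² < 3/4}` is an open convex
subset of `ℝ²`. -/
theorem Cg_isOpen_and_convex :
    IsOpen {p : ℝ × ℝ | 0 < p.1 ∧ 0 < p.2 ∧ p.1 + p.2 < 1 ∧
        p.1 + 2 * p.2 - p.1 * p.2 - p.2 ^ 2 < 3 / 4} ∧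
    Convex ℝ {p : ℝ × ℝ | 0 < p.1 ∧ 0 < p.2 ∧ p.1 + p.2 < 1 ∧
        p.1 + 2 * p.2 - p.1 * p.2 - p.2 ^ 2 < 3 / 4} := by
  constructor
  · have h1 : IsOpen {p : ℝ × ℝ | 0 < p.1} := isOpen_lt continuous_const continuous_fst
    have h2 : IsOpen {p : ℝ × ℝ | 0 < p.2} := isOpen_lt continuous_const continuous_snd
    have h3 : IsOpen {p : ℝ × ℝ | p.1 + p.2 < 1} :=
      isOpen_lt (continuous_fst.add continuous_snd) continuous_const
    have h4 : IsOpen {p : ℝ × ℝ |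
        p.1 + 2 * p.2 - p.1 * p.2 - p.2 ^ 2 < 3 / 4} := by
      apply isOpen_lt _ continuous_const
      fun_prop
    exact ((h1.inter (h2.inter (h3.inter h4))) : _)
  · rintro ⟨x1, y1⟩ ⟨hx1, hy1, hs1, hf1⟩ ⟨x2, y2⟩ ⟨hx2, hy2, hs2, hf2⟩ a b ha hb hab
    replace hx1 : 0 < x1 := hx1
    replace hy1 : 0 < y1 := hy1
    replace hs1 : x1 + y1 < 1 := hs1
    replace hf1 : x1 + 2 * y1 - x1 * y1 - y1 ^ 2 < 3 / 4 := hf1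
    replace hx2 : 0 < x2 := hx2
    replace hy2 : 0 < y2 := hy2
    replace hs2 : x2 + y2 < 1 := hs2
    replace hf2 : x2 + 2 * y2 - x2 * y2 - y2 ^ 2 < 3 / 4 := hf2
    have hB : b = 1 - a := by linarith
    subst hB
    have hc1 : (0:ℝ) < 2 - 2 * y1 - x1 := by linarith
    have hc2 : (0:ℝ) < 2 - 2 * y2 - x2 := by linarith
    have hk1 : (2 - 2 * y1 - x1) ^ 2 > 1 + x1 ^ 2 := by nlinarith
    have hk2 : (2 - 2 * y2 - x2) ^ 2 > 1 + x2 ^ 2 := by nlinarith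
    have hcc : (2 - 2 * y1 - x1) * (2 - 2 * y2 - x2) > 1 + x1 * x2 := by
      nlinarith [mul_pos hc1 hc2, sq_nonneg (x1 - x2),
        sq_nonneg ((2 - 2 * y1 - x1) * (2 - 2 * y2 - x2) - (1 + x1 * x2)),
        mul_lt_mul'' hk2 hk1 (by positivity) (by positivity)]
    have ha1 : a ≤ 1 := by linarith
    simp only [Set.mem_setOf_eq, Prod.smul_mk, Prod.mk_add_mk, smul_eq_mul]
    rcases ha.lt_or_eq with ha' | ha'
    · rcases ha1.lt_or_eq with hb' | hb'
      · have hab' : 0 < a * (1 - a) := mul_pos ha' (by linarith)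
        have e : (a*x1+(1-a)*x2) + 2*(a*y1+(1-a)*y2) - (a*x1+(1-a)*x2)*(a*y1+(1-a)*y2)
              - (a*y1+(1-a)*y2)^2
            = 3/4 - (a^2*((2-2*y1-x1)^2-(1+x1^2)) + (1-a)^2*((2-2*y2-x2)^2-(1+x2^2))
              + 2*(a*(1-a))*((2-2*y1-x1)*(2-2*y2-x2)-(1+x1*x2)))/4 := by ring
        refine ⟨?_, ?_, ?_, ?_⟩
        · nlinarith [mul_pos ha' hx1, mul_pos (sub_pos.mpr hb') hx2]
        · nlinarith [mul_pos ha' hy1, mul_pos (sub_pos.mpr hb') hy2]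
        · nlinarith [mul_pos ha' (sub_pos.mpr hs1), mul_pos (sub_pos.mpr hb') (sub_pos.mpr hs2)]
        · have t1 : 0 < a^2*((2-2*y1-x1)^2-(1+x1^2)) :=
            mul_pos (pow_pos ha' 2) (by linarith)
          have t2 : 0 < (1-a)^2*((2-2*y2-x2)^2-(1+x2^2)) :=
            mul_pos (pow_pos (by linarith : (0:ℝ) < 1 - a) 2) (by linarith)
          have t3 : 0 < (a*(1-a))*((2-2*y1-x1)*(2-2*y2-x2)-(1+x1*x2)) :=
            mul_pos hab' (by linarith)
          linarith [e, t1, t2, t3]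
      · subst hb'
        norm_num
        exact ⟨hx1, hy1, hs1, hf1⟩
    · rw [← ha']
      norm_num
      exact ⟨hx2, hy2, hs2, hf2⟩
end

section
/- The function f(x,y) = ((1-x)/x)·((1-y)/y) is strictly convex on the set C_f = {(x,y) : x>0, y>0, x+y<1, 7x+(18-8√2)y < 3+√2}. -/
/-!
Write `f = (x⁻¹ - 1)(y⁻¹ - 1)`. Its Hessian at `(x, y)` is the quadratic form
`2(y⁻¹ - 1)/x³ · u² + 2uv/(x²y²) + 2(x⁻¹ - 1)/y³ · v²`, whose discriminant has the sign of
`1 - 4(1 - x)(1 - y)`; so it is positive definite as soon as `4(1 - x)(1 - y) > 1`. On `C_f` the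
linear constraint forces `x + y < 3/4`, which gives `4(1 - x)(1 - y) > 1 + 4xy`. Strict convexity
then follows by restricting `f` to segments and applying the one-variable second-derivative test.
-/

open Set

theorem strictConvexOn_of_hasDerivWithinAt2_pos {D : Set ℝ} (hD : Convex ℝ D) {f f' f'' : ℝ → ℝ}
    (hf : ContinuousOn f D) (hf' : ∀ x ∈ interior D, HasDerivWithinAt f (f' x) (interior D) x)
    (hf'' : ∀ x ∈ interior D, HasDerivWithinAt f' (f'' x) (interior D) x)
    (hf''₀ : ∀ x ∈ interior D, 0 < f'' x) : StrictConvexOn ℝ D f := by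
  have h : (interior D).EqOn (deriv f) f' := deriv_eqOn isOpen_interior hf'
  refine strictConvexOn_of_deriv2_pos hD hf fun x hx => ?_
  rw [Function.iterate_succ_apply, Function.iterate_one,
    deriv_eqOn isOpen_interior (fun y hy => (hf'' y hy).congr h (h hy)) hx]
  exact hf''₀ x hx

section LinearOrderedField

variable {𝕜 : Type*} [Field 𝕜] [LinearOrder 𝕜] [IsStrictOrderedRing 𝕜]

theorem StrictConvexOn.of_comp_lineMap {E β : Type*} [AddCommGroup E] [Module 𝕜 E]
    [AddCommMonoid β] [PartialOrder β] [SMul 𝕜 β] {s : Set E} {f : E → β} (hs : Convex 𝕜 s)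
    (h : ∀ x ∈ s, ∀ y ∈ s, x ≠ y → StrictConvexOn 𝕜 (Icc (0 : 𝕜) 1) (f ∘ AffineMap.lineMap x y)) :
    StrictConvexOn 𝕜 s f := by
  refine ⟨hs, fun x hx y hy hxy a b ha hb hab => ?_⟩
  have := (h x hx y hy hxy).2 (left_mem_Icc.2 zero_le_one) (right_mem_Icc.2 zero_le_one)
    zero_ne_one ha hb hab
  simpa [AffineMap.lineMap_apply_module, ← eq_sub_of_add_eq hab] using this

theorem quadratic_form_pos {a b c u v : 𝕜} (ha : 0 < a) (hdisc : b ^ 2 < a * c)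
    (huv : u ≠ 0 ∨ v ≠ 0) : 0 < a * u ^ 2 + 2 * b * u * v + c * v ^ 2 := by
  have hsq : a * (a * u ^ 2 + 2 * b * u * v + c * v ^ 2) =
      (a * u + b * v) ^ 2 + (a * c - b ^ 2) * v ^ 2 := by
    ring
  refine pos_of_mul_pos_right (hsq ▸ ?_) ha.le
  rcases eq_or_ne v 0 with rfl | hv
  · have hu : u ≠ 0 := huv.resolve_right (not_not.2 rfl)
    simp only [mul_zero, zero_pow two_ne_zero, add_zero]
    positivity
  · have : 0 < (a * c - b ^ 2) * v ^ 2 := mul_pos (sub_pos.2 hdisc) (by positivity)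
    positivity

end LinearOrderedField

def posHessianRegion : Set (ℝ × ℝ) :=
  {p | 0 < p.1 ∧ 0 < p.2 ∧ p.1 + p.2 < 1 ∧ 1 < 4 * (1 - p.1) * (1 - p.2)}

theorem hessian_inv_sub_one_mul_inv_sub_one_pos {p : ℝ × ℝ} (hp : p ∈ posHessianRegion)
    {u v : ℝ} (huv : u ≠ 0 ∨ v ≠ 0) :
    0 < 2 * (p.2⁻¹ - 1) / p.1 ^ 3 * u ^ 2 + 2 * (1 / (p.1 ^ 2 * p.2 ^ 2)) * u * v +
      2 * (p.1⁻¹ - 1) / p.2 ^ 3 * v ^ 2 := by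
  obtain ⟨x, y⟩ := p
  obtain ⟨hx, hy, hxy, h4⟩ := hp
  dsimp only at *
  refine quadratic_form_pos ?_ ?_ huv
  · have : 0 < y⁻¹ - 1 := sub_pos.2 (one_lt_inv_iff₀.2 ⟨hy, by linarith⟩)
    positivity
  · have hdet : 2 * (y⁻¹ - 1) / x ^ 3 * (2 * (x⁻¹ - 1) / y ^ 3) =
        4 * (1 - x) * (1 - y) / (x ^ 4 * y ^ 4) := by
      field_simp
      ring
    have hoff : (1 / (x ^ 2 * y ^ 2)) ^ 2 = 1 / (x ^ 4 * y ^ 4) := by ring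
    rw [hdet, hoff]
    exact div_lt_div_of_pos_right h4 (by positivity)

theorem hasDerivAt_inv_sub_one_affine {x u t : ℝ} (h : x + t * u ≠ 0) :
    HasDerivAt (fun s => (x + s * u)⁻¹ - 1) (-u / (x + t * u) ^ 2) t := by
  have hline : HasDerivAt (fun s => x + s * u) u t := by
    simpa using ((hasDerivAt_id t).mul_const u).const_add x
  exact (hline.inv h).sub_const 1

theorem hasDerivAt_neg_div_sq_affine {x u t : ℝ} (h : x + t * u ≠ 0) :
    HasDerivAt (fun s => -u / (x + s * u) ^ 2) (2 * u ^ 2 / (x + t * u) ^ 3) t := by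
  have hline : HasDerivAt (fun s => x + s * u) u t := by
    simpa using ((hasDerivAt_id t).mul_const u).const_add x
  have hsq : HasDerivAt (fun s => (x + s * u) ^ 2) (2 * (x + t * u) * u) t := by
    simpa using hline.fun_pow 2
  refine ((hasDerivAt_const t (-u)).fun_div hsq (pow_ne_zero 2 h)).congr_deriv ?_
  field_simp
  ring

theorem strictConvexOn_Icc_inv_sub_one_mul_inv_sub_one_affine {x y u v : ℝ}
    (huv : u ≠ 0 ∨ v ≠ 0)
    (hseg : ∀ t ∈ Icc (0 : ℝ) 1, (x + t * u, y + t * v) ∈ posHessianRegion) :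
    StrictConvexOn ℝ (Icc 0 1) fun t => ((x + t * u)⁻¹ - 1) * ((y + t * v)⁻¹ - 1) := by
  have hX : ∀ t ∈ Icc (0 : ℝ) 1, x + t * u ≠ 0 := fun t ht => (hseg t ht).1.ne'
  have hY : ∀ t ∈ Icc (0 : ℝ) 1, y + t * v ≠ 0 := fun t ht => (hseg t ht).2.1.ne'
  have hd1 : ∀ t ∈ Icc (0 : ℝ) 1,
      HasDerivAt (fun t => ((x + t * u)⁻¹ - 1) * ((y + t * v)⁻¹ - 1))
        (-u / (x + t * u) ^ 2 * ((y + t * v)⁻¹ - 1) + ((x + t * u)⁻¹ - 1) * (-v / (y + t * v) ^ 2))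
        t := fun t ht =>
    (hasDerivAt_inv_sub_one_affine (hX t ht)).mul (hasDerivAt_inv_sub_one_affine (hY t ht))
  have hd2 : ∀ t ∈ Icc (0 : ℝ) 1,
      HasDerivAt
        (fun t => -u / (x + t * u) ^ 2 * ((y + t * v)⁻¹ - 1) +
          ((x + t * u)⁻¹ - 1) * (-v / (y + t * v) ^ 2))
        (2 * ((y + t * v)⁻¹ - 1) / (x + t * u) ^ 3 * u ^ 2 +
          2 * (1 / ((x + t * u) ^ 2 * (y + t * v) ^ 2)) * u * v +
          2 * ((x + t * u)⁻¹ - 1) / (y + t * v) ^ 3 * v ^ 2) t := by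
    intro t ht
    refine (((hasDerivAt_neg_div_sq_affine (hX t ht)).mul
      (hasDerivAt_inv_sub_one_affine (hY t ht))).add
      ((hasDerivAt_inv_sub_one_affine (hX t ht)).mul
      (hasDerivAt_neg_div_sq_affine (hY t ht)))).congr_deriv ?_
    have hx := hX t ht
    have hy := hY t ht
    generalize x + t * u = X at hx ⊢
    generalize y + t * v = Y at hy ⊢
    field_simp
    ring
  exact strictConvexOn_of_hasDerivWithinAt2_pos (convex_Icc 0 1)
    (fun t ht => (hd1 t ht).continuousAt.continuousWithinAt)
    (fun t ht => (hd1 t (interior_subset ht)).hasDerivWithinAt)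
    (fun t ht => (hd2 t (interior_subset ht)).hasDerivWithinAt)
    fun t ht => hessian_inv_sub_one_mul_inv_sub_one_pos (hseg t (interior_subset ht)) huv

theorem strictConvexOn_inv_sub_one_mul_inv_sub_one {s : Set (ℝ × ℝ)} (hs : Convex ℝ s)
    (hsub : s ⊆ posHessianRegion) : StrictConvexOn ℝ s fun p => (p.1⁻¹ - 1) * (p.2⁻¹ - 1) := by
  refine StrictConvexOn.of_comp_lineMap hs fun p hp q hq hpq => ?_
  have hline : ∀ t : ℝ,
      AffineMap.lineMap p q t = (p.1 + t * (q.1 - p.1), p.2 + t * (q.2 - p.2)) := fun t => by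
    ext <;> simp [AffineMap.lineMap_apply_module'] <;> ring
  have huv : q.1 - p.1 ≠ 0 ∨ q.2 - p.2 ≠ 0 := by
    rw [Ne, Prod.ext_iff, not_and_or] at hpq
    simpa only [sub_ne_zero, ne_comm] using hpq
  refine (strictConvexOn_Icc_inv_sub_one_mul_inv_sub_one_affine huv fun t ht =>
    hline t ▸ hsub (hs.lineMap_mem hp hq ht)).congr fun t _ => ?_
  simp [hline]

-- `C_f` is the triangle with vertices `0`, `((3 + √2)/7, 0)` and `(0, (3 + √2)/(18 - 8√2))`,
-- on which `x + y` is at most `(3 + √2)/(18 - 8√2) ≈ 0.66`.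
theorem add_lt_three_quarters {x y : ℝ} (hx : 0 ≤ x)
    (h : 7 * x + (18 - 8 * Real.sqrt 2) * y < 3 + Real.sqrt 2) : x + y < 3 / 4 := by
  have hupper : Real.sqrt 2 < 3 / 2 := by
    rw [Real.sqrt_lt' (by norm_num)]
    norm_num
  have hlower : 11 / 8 < Real.sqrt 2 := by
    rw [Real.lt_sqrt (by norm_num)]
    norm_num
  have hk : 0 < 18 - 8 * Real.sqrt 2 := by linarith
  have hmul : (18 - 8 * Real.sqrt 2) * (x + y) < (18 - 8 * Real.sqrt 2) * (3 / 4) := by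
    nlinarith [mul_nonneg hx (by linarith : (0 : ℝ) ≤ 7 - (18 - 8 * Real.sqrt 2))]
  exact lt_of_mul_lt_mul_left hmul hk.le

/-- The function `f(x,y) = ((1-x)/x)·((1-y)/y)` is strictly convex on
`C_f = {(x,y) : x>0, y>0, x+y<1, 7x+(18-8√2)y < 3+√2}`. -/
theorem strictConvexOn_f :
    StrictConvexOn ℝ
      {p : ℝ × ℝ | 0 < p.1 ∧ 0 < p.2 ∧ p.1 + p.2 < 1 ∧
        7 * p.1 + (18 - 8 * Real.sqrt 2) * p.2 < 3 + Real.sqrt 2}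
      (fun p : ℝ × ℝ => ((1 - p.1) / p.1) * ((1 - p.2) / p.2)) := by
  refine (strictConvexOn_inv_sub_one_mul_inv_sub_one ?_ ?_).congr fun p hp => ?_
  · exact (convex_halfSpace_gt (LinearMap.fst ℝ ℝ ℝ).isLinear 0).inter <|
      (convex_halfSpace_gt (LinearMap.snd ℝ ℝ ℝ).isLinear 0).inter <|
      (convex_halfSpace_lt (LinearMap.fst ℝ ℝ ℝ + LinearMap.snd ℝ ℝ ℝ).isLinear 1).inter <|
      convex_halfSpace_lt
        ((7 : ℝ) • LinearMap.fst ℝ ℝ ℝ + (18 - 8 * Real.sqrt 2) • LinearMap.snd ℝ ℝ ℝ).isLinear _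
  · rintro p ⟨hx, hy, hxy, hline⟩
    have hsum := add_lt_three_quarters hx.le hline
    exact ⟨hx, hy, hxy, by nlinarith [mul_pos hx hy]⟩
  · have := hp.1.ne'
    have := hp.2.1.ne'
    field_simp
end

section
/- In a free group on two generators ξ, η, for each k ≥ 2 the number of pairs (γ, ψ) with ψ a reduced word of length exactly k, γ a nontrivial reduced word of length at most k, and such that the product γψ reduces to a word of length at most k, equals 4·3^{k-1}·r_k, where r_k = 1 + Σ_{i=1}^{k-1}(1 + 2·Σ_{j=1}^{min{i,k-i}} 3^{j-1}). -/
/-!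
If the reduced words of `x` and `y` are `p ++ s` and `p ++ t` with `p` their longest common
prefix, then the reduced word of `x⁻¹ * y` is `invRev s ++ t`. Hence, for `|γ| = m`, we have
`|γψ| ≤ |ψ|` exactly when the reduced word of `γ⁻¹` begins with the first `⌈m/2⌉` letters of `ψ`.
Each of the remaining `⌊m/2⌋` letters of `γ⁻¹` can be chosen in `3` ways, so every `ψ` of
length `k` contributes `∑_{m=1}^{k} 3^⌊m/2⌋`. Reindexing `m ∈ [2, k]` by `i ∈ [1, k-1]` with
`⌊m/2⌋ = min(i, k-i)`, and using `1 + 2 ∑_{j=1}^{n} 3^(j-1) = 3^n`, turns this sum into `r_k`.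
-/

namespace List

variable {β : Type*}

theorem exists_common_prefix (a b : List β) :
    ∃ p s t, a = p ++ s ∧ b = p ++ t ∧ ∀ x ∈ s.head?, ∀ y ∈ t.head?, x ≠ y := by
  induction a generalizing b with
  | nil => exact ⟨[], [], b, rfl, rfl, by simp⟩
  | cons x a ih =>
    cases b with
    | nil => exact ⟨[], x :: a, [], rfl, rfl, by simp⟩
    | cons y b =>
      by_cases hxy : x = y
      · obtain ⟨p, s, t, rfl, rfl, hst⟩ := ih b
        exact ⟨x :: p, s, t, rfl, by rw [hxy]; rfl, hst⟩
      · exact ⟨[], x :: a, y :: b, rfl, rfl, by simpa⟩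

theorem take_append_eq_take_append_iff {p s t : List β}
    (hst : ∀ x ∈ s.head?, ∀ y ∈ t.head?, x ≠ y) {c : ℕ} (hc : c ≤ (p ++ s).length) :
    (p ++ s).take c = (p ++ t).take c ↔ c ≤ p.length := by
  refine ⟨fun h => ?_, fun h => by rw [take_append_of_le_length h, take_append_of_le_length h]⟩
  by_contra! hpc
  obtain ⟨j, hj⟩ : ∃ j, c - p.length = j + 1 := ⟨c - p.length - 1, by omega⟩
  rw [take_append, take_append, hj, append_cancel_left_eq] at h
  match s, t, h with
  | [], _, _ => simp at hc; omega
  | x :: s, [], h => simp at h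
  | x :: s, y :: t, h =>
    rw [take_succ_cons, take_succ_cons, cons.injEq] at h
    exact hst x rfl y rfl h.1

end List

namespace FreeGroup

variable {α : Type*}

open List

theorem fst_eq_imp_snd_eq_iff_ne (x y : α × Bool) :
    (x.1 = y.1 → x.2 = y.2) ↔ y ≠ (x.1, !x.2) := by
  obtain ⟨x₁, x₂⟩ := x
  obtain ⟨y₁, y₂⟩ := y
  cases x₂ <;> cases y₂ <;> simp [eq_comm]

variable [DecidableEq α]

theorem isReduced_invRev_append {s t : List (α × Bool)} (hs : IsReduced s) (ht : IsReduced t)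
    (hst : ∀ x ∈ s.head?, ∀ y ∈ t.head?, x ≠ y) : IsReduced (invRev s ++ t) := by
  have hs' : IsReduced (invRev s) := .of_reduce_eq (by rw [reduce_invRev, hs.reduce_eq])
  refine isChain_append.2 ⟨hs', ht, ?_⟩
  cases s with
  | nil => simp
  | cons x s =>
    intro a ha b hb
    simp only [invRev, map_cons, reverse_cons, getLast?_append, getLast?_singleton,
      Option.some_or, Option.mem_def, Option.some.injEq] at ha
    rw [← ha, fst_eq_imp_snd_eq_iff_ne, Bool.not_not]
    exact (hst x rfl b hb).symm

theorem norm_inv_mul_of_toWord_eq_append {x y : FreeGroup α} {p s t : List (α × Bool)}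
    (hx : x.toWord = p ++ s) (hy : y.toWord = p ++ t)
    (hst : ∀ a ∈ s.head?, ∀ b ∈ t.head?, a ≠ b) : norm (x⁻¹ * y) = s.length + t.length := by
  have hs : IsReduced s := isReduced_toWord.infix (hx ▸ (suffix_append p s).isInfix)
  have ht : IsReduced t := isReduced_toWord.infix (hy ▸ (suffix_append p t).isInfix)
  have hxy : x⁻¹ * y = mk (invRev s ++ t) := by
    rw [← mk_toWord (x := x), ← mk_toWord (x := y), hx, hy, ← mul_mk, ← mul_mk, ← mul_mk,
      ← inv_mk]
    group
  rw [hxy, norm, toWord_mk, (isReduced_invRev_append hs ht hst).reduce_eq, length_append,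
    invRev_length]

theorem norm_inv_mul_le_norm_iff (x y : FreeGroup α) :
    norm (x⁻¹ * y) ≤ norm y ↔
      x.toWord.take ((norm x + 1) / 2) = y.toWord.take ((norm x + 1) / 2) := by
  obtain ⟨p, s, t, hx, hy, hst⟩ := x.toWord.exists_common_prefix y.toWord
  rw [norm_inv_mul_of_toWord_eq_append hx hy hst, hx, hy,
    take_append_eq_take_append_iff hst (by rw [← hx, norm]; omega), norm, norm, hx, hy]
  simp only [length_append]
  omega

open Finset

instance : DecidablePred (IsReduced (α := α)) :=
  fun L => inferInstanceAs (Decidable (L.IsChain _))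

theorem mem_image_mk_iff {s : Finset (List (α × Bool))} (hs : ∀ u ∈ s, IsReduced u)
    {x : FreeGroup α} : x ∈ s.image mk ↔ x.toWord ∈ s := by
  refine ⟨?_, fun h => Finset.mem_image.2 ⟨_, h, mk_toWord⟩⟩
  rw [Finset.mem_image]
  rintro ⟨u, hu, rfl⟩
  rwa [toWord_mk, (hs u hu).reduce_eq]

theorem card_image_mk {s : Finset (List (α × Bool))} (hs : ∀ u ∈ s, IsReduced u) :
    #(s.image mk) = #s :=
  card_image_of_injOn fun u hu u' hu' h => by
    simpa [(hs u hu).reduce_eq, (hs u' hu').reduce_eq] using congrArg toWord h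

section Counting

variable [Fintype α]

open scoped Pointwise

def reducedExtensions (v : List (α × Bool)) : ℕ → Finset (List (α × Bool))
  | 0 => {v}
  | t + 1 => (reducedExtensions v t).biUnion fun u =>
      (univ.filter fun a => IsReduced (u ++ [a])).image (u ++ [·])

theorem mem_reducedExtensions {v : List (α × Bool)} (hv : IsReduced v) {t : ℕ}
    {u : List (α × Bool)} :
    u ∈ reducedExtensions v t ↔ IsReduced u ∧ u.length = v.length + t ∧ v <+: u := by
  induction t generalizing u with
  | zero =>
    simp only [reducedExtensions, Finset.mem_singleton, add_zero]
    refine ⟨by rintro rfl; exact ⟨hv, rfl, prefix_refl _⟩, fun ⟨_, hl, hp⟩ => ?_⟩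
    exact (hp.eq_of_length hl.symm).symm
  | succ t ih =>
    simp only [reducedExtensions, mem_biUnion, mem_image, Finset.mem_filter, mem_univ, true_and]
    constructor
    · rintro ⟨u, hu, a, hua, rfl⟩
      obtain ⟨-, hl, hp⟩ := ih.1 hu
      exact ⟨hua, by simp [hl, add_assoc], hp.trans (prefix_append u [a])⟩
    · rintro ⟨hu, hl, hp⟩
      obtain ⟨w, a, rfl⟩ : ∃ w a, u = w ++ [a] :=
        (eq_nil_or_concat' u).resolve_left (by rintro rfl; simp at hl)
      have hvw : v <+: w := (prefix_concat_iff.1 hp).resolve_left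
        (by rintro rfl; simp at hl)
      exact ⟨w, ih.2 ⟨hu.infix (prefix_append w [a]).isInfix, by simp at hl; omega, hvw⟩,
        a, hu, rfl⟩

theorem card_filter_isReduced_append_singleton {u : List (α × Bool)} (hu : IsReduced u)
    (hne : u ≠ []) : #(univ.filter fun a => IsReduced (u ++ [a])) = 2 * Fintype.card α - 1 := by
  obtain ⟨w, b, rfl⟩ := (eq_nil_or_concat' u).resolve_left hne
  have : (univ.filter fun a => IsReduced (w ++ [b] ++ [a])) = univ.erase (b.1, !b.2) := by
    ext a
    simp only [Finset.mem_filter, mem_univ, true_and, mem_erase, and_true]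
    unfold IsReduced at hu ⊢
    rw [isChain_append, and_iff_right hu]
    simp [fst_eq_imp_snd_eq_iff_ne]
  rw [this, card_erase_of_mem (mem_univ _), card_univ, Fintype.card_prod, Fintype.card_bool,
    mul_comm]

theorem card_reducedExtensions_succ {v : List (α × Bool)} (hv : IsReduced v) {t : ℕ}
    (ht : 0 < v.length + t) :
    #(reducedExtensions v (t + 1)) = #(reducedExtensions v t) * (2 * Fintype.card α - 1) := by
  rw [reducedExtensions, card_biUnion, Finset.sum_const_nat]
  · intro u hu
    obtain ⟨hu, hl, -⟩ := (mem_reducedExtensions hv).1 hu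
    rw [card_image_of_injective _ (fun a b h => (append_singleton_inj.1 h).2),
      card_filter_isReduced_append_singleton hu (by rintro rfl; simp at hl; omega)]
  · intro u _ u' _ huu'
    simp only [Function.onFun, Finset.disjoint_left, mem_image]
    rintro _ ⟨a, -, rfl⟩ ⟨b, -, h⟩
    exact huu' (append_singleton_inj.1 h).1.symm

theorem card_reducedExtensions {v : List (α × Bool)} (hv : IsReduced v) (hne : v ≠ []) (t : ℕ) :
    #(reducedExtensions v t) = (2 * Fintype.card α - 1) ^ t := by
  induction t with
  | zero => simp [reducedExtensions]
  | succ t ih =>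
    rw [card_reducedExtensions_succ hv (by simp [length_pos_iff.2 hne]), ih, pow_succ]

theorem card_reducedExtensions_nil_succ (n : ℕ) :
    #(reducedExtensions ([] : List (α × Bool)) (n + 1)) =
      2 * Fintype.card α * (2 * Fintype.card α - 1) ^ n := by
  induction n with
  | zero =>
    simp only [reducedExtensions, singleton_biUnion, List.nil_append]
    rw [filter_true_of_mem fun _ _ => .singleton,
      card_image_of_injective _ fun _ _ => List.singleton_inj.1,
      card_univ, Fintype.card_prod, Fintype.card_bool, pow_zero, mul_one, mul_comm]
  | succ n ih => rw [card_reducedExtensions_succ .nil (by simp), ih, pow_succ, mul_assoc]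

def sphere (n : ℕ) : Finset (FreeGroup α) := (reducedExtensions [] n).image mk

theorem mem_sphere {n : ℕ} {x : FreeGroup α} : x ∈ sphere n ↔ norm x = n := by
  rw [sphere, mem_image_mk_iff fun u hu => ((mem_reducedExtensions .nil).1 hu).1,
    mem_reducedExtensions .nil]
  simp [isReduced_toWord, norm]

theorem card_sphere_succ (n : ℕ) :
    #(sphere (α := α) (n + 1)) = 2 * Fintype.card α * (2 * Fintype.card α - 1) ^ n := by
  rw [sphere, card_image_mk fun u hu => ((mem_reducedExtensions .nil).1 hu).1,
    card_reducedExtensions_nil_succ]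

theorem card_filter_isPrefix_sphere {v : List (α × Bool)} (hv : IsReduced v) (hne : v ≠ [])
    {m : ℕ} (hm : v.length ≤ m) :
    #((sphere m).filter fun x => v <+: x.toWord) = (2 * Fintype.card α - 1) ^ (m - v.length) := by
  have hred : ∀ u ∈ reducedExtensions v (m - v.length), IsReduced u :=
    fun u hu => ((mem_reducedExtensions hv).1 hu).1
  have : (sphere m).filter (fun x => v <+: x.toWord) =
      (reducedExtensions v (m - v.length)).image mk := by
    ext x
    rw [Finset.mem_filter, mem_sphere, mem_image_mk_iff hred, mem_reducedExtensions hv, norm,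
      Nat.add_sub_cancel' hm]
    simp only [isReduced_toWord, true_and]
  rw [this, card_image_mk hred, card_reducedExtensions hv hne]

theorem card_filter_norm_mul_le_sphere {m : ℕ} {ψ : FreeGroup α} (hm : 1 ≤ m)
    (hmψ : m ≤ norm ψ) :
    #((sphere m).filter fun γ => norm (γ * ψ) ≤ norm ψ) = (2 * Fintype.card α - 1) ^ (m / 2) := by
  set v := ψ.toWord.take ((m + 1) / 2)
  have hv : v.length = (m + 1) / 2 := by rw [length_take]; unfold norm at hmψ; omega
  have : (sphere m).filter (fun γ => norm (γ * ψ) ≤ norm ψ) =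
      ((sphere m).filter fun δ => v <+: δ.toWord)⁻¹ := by
    ext γ
    rw [mem_inv', Finset.mem_filter, Finset.mem_filter, mem_sphere, mem_sphere, norm_inv_eq,
      ← inv_inv γ, norm_inv_mul_le_norm_iff, inv_inv, norm_inv_eq, prefix_iff_eq_take, hv]
    exact and_congr_right fun h => by rw [h]; exact eq_comm
  rw [this, card_inv, card_filter_isPrefix_sphere (isReduced_toWord.infix (take_prefix _ _).isInfix)
    (by rw [← length_pos_iff, hv]; omega) (hv.trans_le (by omega)), hv]
  congr 1
  omega

theorem ncard_norm_mul_le_pairs (k : ℕ) :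
    {p : FreeGroup α × FreeGroup α |
        norm p.2 = k ∧ p.1 ≠ 1 ∧ norm p.1 ≤ k ∧ norm (p.1 * p.2) ≤ k}.ncard =
      #(sphere (α := α) k) * ∑ m ∈ Icc 1 k, (2 * Fintype.card α - 1) ^ (m / 2) := by
  have hdisj : (Icc 1 k : Set ℕ).PairwiseDisjoint (sphere (α := α)) := fun m _ n _ hmn =>
    Finset.disjoint_left.2 fun x hm hn => hmn ((mem_sphere.1 hm).symm.trans (mem_sphere.1 hn))
  have hset : {p : FreeGroup α × FreeGroup α |
        norm p.2 = k ∧ p.1 ≠ 1 ∧ norm p.1 ≤ k ∧ norm (p.1 * p.2) ≤ k} =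
      ((((Icc 1 k).biUnion sphere ×ˢ sphere k).filter fun p => norm (p.1 * p.2) ≤ norm p.2 :
        Finset (FreeGroup α × FreeGroup α)) : Set (FreeGroup α × FreeGroup α)) := by
    ext ⟨γ, ψ⟩
    simp only [coe_filter, Finset.mem_product, mem_biUnion, Finset.mem_Icc, mem_sphere,
      exists_eq_right', Set.mem_ofPred, Ne, ← norm_eq_zero]
    omega
  rw [hset, Set.ncard_coe_finset, card_filter, sum_product_right, Finset.sum_const_nat]
  intro ψ hψ
  rw [sum_biUnion hdisj]
  refine sum_congr rfl fun m hm => ?_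
  rw [← card_filter, card_filter_norm_mul_le_sphere] <;> simp_all [mem_sphere]

end Counting

end FreeGroup

namespace Finset

theorem sum_Icc_comp_div_two {M : Type*} [AddCommMonoid M] (f : ℕ → M) {k : ℕ} (hk : 1 ≤ k) :
    ∑ m ∈ Icc 1 k, f (m / 2) = f 0 + ∑ i ∈ Icc 1 (k - 1), f (min i (k - i)) := by
  rw [← insert_Icc_add_one_left_eq_Icc hk, sum_insert (by simp)]
  congr 1
  -- `m = 2i` for `2i ≤ k` and `m = 2(k - i) + 1` otherwise
  refine sum_nbij' (fun m => if m % 2 = 0 then m / 2 else k - m / 2)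
    (fun i => if 2 * i ≤ k then 2 * i else 2 * (k - i) + 1) ?_ ?_ ?_ ?_ ?_ <;>
    intro m hm <;> simp only [mem_Icc] at hm ⊢ <;>
    split_ifs <;> first | omega | (congr 1; omega)

theorem one_add_two_mul_sum_Icc_pow_three (M : ℕ) :
    1 + 2 * ∑ j ∈ Icc 1 M, 3 ^ (j - 1) = 3 ^ M := by
  rw [← Ico_add_one_right_eq_Icc, sum_Ico_eq_sum_range, add_tsub_cancel_right,
    mul_comm, add_comm]
  simp only [add_tsub_cancel_left]
  exact geom_sum_mul_add 2 M

end Finset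

/-- In the free group on two generators, for `k ≥ 2` the number of pairs
`(γ, ψ)` with `ψ` of reduced length exactly `k`, `γ` nontrivial of reduced
length at most `k`, and `γψ` of reduced length at most `k`, equals
`4·3^(k-1)·r_k` with `r_k = 1 + Σ_{i=1}^{k-1}(1 + 2·Σ_{j=1}^{min(i,k-i)} 3^(j-1))`. -/
theorem count_group_theoretical_relations (k : ℕ) (hk : 2 ≤ k) :
    Set.ncard {p : FreeGroup (Fin 2) × FreeGroup (Fin 2) |
        (FreeGroup.norm p.2 = k) ∧ p.1 ≠ 1 ∧ FreeGroup.norm p.1 ≤ k ∧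
        FreeGroup.norm (p.1 * p.2) ≤ k}
      = 4 * 3 ^ (k - 1) *
        (1 + ∑ i ∈ Finset.Icc 1 (k - 1),
          (1 + 2 * ∑ j ∈ Finset.Icc 1 (min i (k - i)), 3 ^ (j - 1))) := by
  obtain ⟨n, rfl⟩ : ∃ n, k = n + 1 := ⟨k - 1, by omega⟩
  rw [FreeGroup.ncard_norm_mul_le_pairs, FreeGroup.card_sphere_succ,
    Finset.sum_Icc_comp_div_two _ (by omega)]
  simp only [Finset.one_add_two_mul_sum_Icc_pow_three, Fintype.card_fin]
  norm_num
end

section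
/- For d = 12 (k = 2), consider the 12 functions on Δ^{11} given explicitly by f_i(x) = ((1 − x_a − x_b − x_c)/(x_a + x_b + x_c))·((1 − x_i)/x_i), where {a,b,c} is the block I_{j(i)} determined by i mod 4 (e.g. f₁ uses {10,11,12}, f₄ uses {1,2,3}, f₇ uses {4,5,6}, f₁₂ uses {1,2,3}). Then min over Δ^{11} of max_i f_i(x) = 33, attained uniquely at x = (1/12,…,1/12). -/
open Finset

/-- `σ(t) = (1-t)/t`. -/
noncomputable def sg (t : ℝ) : ℝ := (1 - t) / t

/-- The block index `j(i)`: `j = 4,3,2,1` according as `i ≡ 1,2,3,0 (mod 4)`,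
for the (1-based) index `i`. -/
def blockIdx (i : ℕ) : ℕ :=
  match i % 4 with
  | 1 => 4
  | 2 => 3
  | 3 => 2
  | _ => 1

/-- The displacement function `f_i(x) = σ(Σ_{j(i)}(x))·σ(x_i)`, where
`Σ_j(x)` sums the coordinates with (1-based) index in the block
`I_j = {(j-1)·3^(k-1)+1, …, j·3^(k-1)}`. -/
noncomputable def fdisp (k : ℕ) (i : Fin (4 * 3 ^ (k - 1)))
    (x : Fin (4 * 3 ^ (k - 1)) → ℝ) : ℝ :=
  sg (∑ l ∈ Finset.univ.filter
        (fun l : Fin (4 * 3 ^ (k - 1)) =>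
          (blockIdx (i.val + 1) - 1) * 3 ^ (k - 1) + 1 ≤ l.val + 1 ∧
          l.val + 1 ≤ blockIdx (i.val + 1) * 3 ^ (k - 1)), x l)
    * sg (x i)

/-- The open standard simplex with `d = 4·3^(k-1)`. -/
def simplexPos (k : ℕ) : Set (Fin (4 * 3 ^ (k - 1)) → ℝ) :=
  {x | (∀ i, 0 < x i) ∧ ∑ i, x i = 1}

/-- `F(x) = max_i f_i(x)`. -/
noncomputable def Fmax (k : ℕ) (x : Fin (4 * 3 ^ (k - 1)) → ℝ) : ℝ :=
  Finset.univ.sup' ⟨⟨0, by positivity⟩, Finset.mem_univ _⟩ (fun i => fdisp k i x)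

lemma sum12 (x : Fin 12 → ℝ) : ∑ i, x i =
    x 0 + x 1 + x 2 + x 3 + x 4 + x 5 + x 6 + x 7 + x 8 + x 9 + x 10 + x 11 := by
  simp only [Fin.sum_univ_succ, Finset.univ_unique, Fin.default_eq_zero, Finset.sum_singleton,
    show ((Fin.succ 0) : Fin 12) = 1 from rfl,
    show ((Fin.succ 0).succ : Fin 12) = 2 from rfl,
    show ((Fin.succ 0).succ.succ : Fin 12) = 3 from rfl,
    show ((Fin.succ 0).succ.succ.succ : Fin 12) = 4 from rfl,
    show ((Fin.succ 0).succ.succ.succ.succ : Fin 12) = 5 from rfl,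
    show ((Fin.succ 0).succ.succ.succ.succ.succ : Fin 12) = 6 from rfl,
    show ((Fin.succ 0).succ.succ.succ.succ.succ.succ : Fin 12) = 7 from rfl,
    show ((Fin.succ 0).succ.succ.succ.succ.succ.succ.succ : Fin 12) = 8 from rfl,
    show ((Fin.succ 0).succ.succ.succ.succ.succ.succ.succ.succ : Fin 12) = 9 from rfl,
    show ((Fin.succ 0).succ.succ.succ.succ.succ.succ.succ.succ.succ : Fin 12) = 10 from rfl,
    show ((Fin.succ 0).succ.succ.succ.succ.succ.succ.succ.succ.succ.succ : Fin 12) = 11 from rfl]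
  ring

lemma fdisp_eval_0 (x : Fin 12 → ℝ) :
    fdisp 2 (0 : Fin 12) x = sg (x 9 + x 10 + x 11) * sg (x 0) := by
  rw [fdisp]
  congr 2
  rw [show Finset.univ.filter
        (fun l : Fin (4 * 3 ^ (2 - 1)) =>
          (blockIdx (((0:Fin 12)).val + 1) - 1) * 3 ^ (2 - 1) + 1 ≤ l.val + 1 ∧
          l.val + 1 ≤ blockIdx (((0:Fin 12)).val + 1) * 3 ^ (2 - 1)) =
        ({9,10,11} : Finset (Fin 12)) from by decide]
  rw [Finset.sum_insert (by decide), Finset.sum_insert (by decide), Finset.sum_singleton]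
  ring

lemma fdisp_eval_1 (x : Fin 12 → ℝ) :
    fdisp 2 (1 : Fin 12) x = sg (x 6 + x 7 + x 8) * sg (x 1) := by
  rw [fdisp]
  congr 2
  rw [show Finset.univ.filter
        (fun l : Fin (4 * 3 ^ (2 - 1)) =>
          (blockIdx (((1:Fin 12)).val + 1) - 1) * 3 ^ (2 - 1) + 1 ≤ l.val + 1 ∧
          l.val + 1 ≤ blockIdx (((1:Fin 12)).val + 1) * 3 ^ (2 - 1)) =
        ({6,7,8} : Finset (Fin 12)) from by decide]
  rw [Finset.sum_insert (by decide), Finset.sum_insert (by decide), Finset.sum_singleton]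
  ring

lemma fdisp_eval_2 (x : Fin 12 → ℝ) :
    fdisp 2 (2 : Fin 12) x = sg (x 3 + x 4 + x 5) * sg (x 2) := by
  rw [fdisp]
  congr 2
  rw [show Finset.univ.filter
        (fun l : Fin (4 * 3 ^ (2 - 1)) =>
          (blockIdx (((2:Fin 12)).val + 1) - 1) * 3 ^ (2 - 1) + 1 ≤ l.val + 1 ∧
          l.val + 1 ≤ blockIdx (((2:Fin 12)).val + 1) * 3 ^ (2 - 1)) =
        ({3,4,5} : Finset (Fin 12)) from by decide]
  rw [Finset.sum_insert (by decide), Finset.sum_insert (by decide), Finset.sum_singleton]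
  ring

lemma fdisp_eval_3 (x : Fin 12 → ℝ) :
    fdisp 2 (3 : Fin 12) x = sg (x 0 + x 1 + x 2) * sg (x 3) := by
  rw [fdisp]
  congr 2
  rw [show Finset.univ.filter
        (fun l : Fin (4 * 3 ^ (2 - 1)) =>
          (blockIdx (((3:Fin 12)).val + 1) - 1) * 3 ^ (2 - 1) + 1 ≤ l.val + 1 ∧
          l.val + 1 ≤ blockIdx (((3:Fin 12)).val + 1) * 3 ^ (2 - 1)) =
        ({0,1,2} : Finset (Fin 12)) from by decide]
  rw [Finset.sum_insert (by decide), Finset.sum_insert (by decide), Finset.sum_singleton]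
  ring

lemma fdisp_eval_4 (x : Fin 12 → ℝ) :
    fdisp 2 (4 : Fin 12) x = sg (x 9 + x 10 + x 11) * sg (x 4) := by
  rw [fdisp]
  congr 2
  rw [show Finset.univ.filter
        (fun l : Fin (4 * 3 ^ (2 - 1)) =>
          (blockIdx (((4:Fin 12)).val + 1) - 1) * 3 ^ (2 - 1) + 1 ≤ l.val + 1 ∧
          l.val + 1 ≤ blockIdx (((4:Fin 12)).val + 1) * 3 ^ (2 - 1)) =
        ({9,10,11} : Finset (Fin 12)) from by decide]
  rw [Finset.sum_insert (by decide), Finset.sum_insert (by decide), Finset.sum_singleton]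
  ring

lemma fdisp_eval_5 (x : Fin 12 → ℝ) :
    fdisp 2 (5 : Fin 12) x = sg (x 6 + x 7 + x 8) * sg (x 5) := by
  rw [fdisp]
  congr 2
  rw [show Finset.univ.filter
        (fun l : Fin (4 * 3 ^ (2 - 1)) =>
          (blockIdx (((5:Fin 12)).val + 1) - 1) * 3 ^ (2 - 1) + 1 ≤ l.val + 1 ∧
          l.val + 1 ≤ blockIdx (((5:Fin 12)).val + 1) * 3 ^ (2 - 1)) =
        ({6,7,8} : Finset (Fin 12)) from by decide]
  rw [Finset.sum_insert (by decide), Finset.sum_insert (by decide), Finset.sum_singleton]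
  ring

lemma fdisp_eval_6 (x : Fin 12 → ℝ) :
    fdisp 2 (6 : Fin 12) x = sg (x 3 + x 4 + x 5) * sg (x 6) := by
  rw [fdisp]
  congr 2
  rw [show Finset.univ.filter
        (fun l : Fin (4 * 3 ^ (2 - 1)) =>
          (blockIdx (((6:Fin 12)).val + 1) - 1) * 3 ^ (2 - 1) + 1 ≤ l.val + 1 ∧
          l.val + 1 ≤ blockIdx (((6:Fin 12)).val + 1) * 3 ^ (2 - 1)) =
        ({3,4,5} : Finset (Fin 12)) from by decide]
  rw [Finset.sum_insert (by decide), Finset.sum_insert (by decide), Finset.sum_singleton]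
  ring

lemma fdisp_eval_7 (x : Fin 12 → ℝ) :
    fdisp 2 (7 : Fin 12) x = sg (x 0 + x 1 + x 2) * sg (x 7) := by
  rw [fdisp]
  congr 2
  rw [show Finset.univ.filter
        (fun l : Fin (4 * 3 ^ (2 - 1)) =>
          (blockIdx (((7:Fin 12)).val + 1) - 1) * 3 ^ (2 - 1) + 1 ≤ l.val + 1 ∧
          l.val + 1 ≤ blockIdx (((7:Fin 12)).val + 1) * 3 ^ (2 - 1)) =
        ({0,1,2} : Finset (Fin 12)) from by decide]
  rw [Finset.sum_insert (by decide), Finset.sum_insert (by decide), Finset.sum_singleton]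
  ring

lemma fdisp_eval_8 (x : Fin 12 → ℝ) :
    fdisp 2 (8 : Fin 12) x = sg (x 9 + x 10 + x 11) * sg (x 8) := by
  rw [fdisp]
  congr 2
  rw [show Finset.univ.filter
        (fun l : Fin (4 * 3 ^ (2 - 1)) =>
          (blockIdx (((8:Fin 12)).val + 1) - 1) * 3 ^ (2 - 1) + 1 ≤ l.val + 1 ∧
          l.val + 1 ≤ blockIdx (((8:Fin 12)).val + 1) * 3 ^ (2 - 1)) =
        ({9,10,11} : Finset (Fin 12)) from by decide]
  rw [Finset.sum_insert (by decide), Finset.sum_insert (by decide), Finset.sum_singleton]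
  ring

lemma fdisp_eval_9 (x : Fin 12 → ℝ) :
    fdisp 2 (9 : Fin 12) x = sg (x 6 + x 7 + x 8) * sg (x 9) := by
  rw [fdisp]
  congr 2
  rw [show Finset.univ.filter
        (fun l : Fin (4 * 3 ^ (2 - 1)) =>
          (blockIdx (((9:Fin 12)).val + 1) - 1) * 3 ^ (2 - 1) + 1 ≤ l.val + 1 ∧
          l.val + 1 ≤ blockIdx (((9:Fin 12)).val + 1) * 3 ^ (2 - 1)) =
        ({6,7,8} : Finset (Fin 12)) from by decide]
  rw [Finset.sum_insert (by decide), Finset.sum_insert (by decide), Finset.sum_singleton]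
  ring

lemma fdisp_eval_10 (x : Fin 12 → ℝ) :
    fdisp 2 (10 : Fin 12) x = sg (x 3 + x 4 + x 5) * sg (x 10) := by
  rw [fdisp]
  congr 2
  rw [show Finset.univ.filter
        (fun l : Fin (4 * 3 ^ (2 - 1)) =>
          (blockIdx (((10:Fin 12)).val + 1) - 1) * 3 ^ (2 - 1) + 1 ≤ l.val + 1 ∧
          l.val + 1 ≤ blockIdx (((10:Fin 12)).val + 1) * 3 ^ (2 - 1)) =
        ({3,4,5} : Finset (Fin 12)) from by decide]
  rw [Finset.sum_insert (by decide), Finset.sum_insert (by decide), Finset.sum_singleton]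
  ring

lemma fdisp_eval_11 (x : Fin 12 → ℝ) :
    fdisp 2 (11 : Fin 12) x = sg (x 0 + x 1 + x 2) * sg (x 11) := by
  rw [fdisp]
  congr 2
  rw [show Finset.univ.filter
        (fun l : Fin (4 * 3 ^ (2 - 1)) =>
          (blockIdx (((11:Fin 12)).val + 1) - 1) * 3 ^ (2 - 1) + 1 ≤ l.val + 1 ∧
          l.val + 1 ≤ blockIdx (((11:Fin 12)).val + 1) * 3 ^ (2 - 1)) =
        ({0,1,2} : Finset (Fin 12)) from by decide]
  rw [Finset.sum_insert (by decide), Finset.sum_insert (by decide), Finset.sum_singleton]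
  ring


lemma lb_aux (s t : ℝ) (hs : 0 < s) (ht : 0 < t) (h : sg s * sg t ≤ 33) :
    1/12 - (11/27)*(s - 1/4) ≤ t := by
  rw [sg, sg, div_mul_div_comm, div_le_iff₀ (by positivity)] at h
  nlinarith [sq_nonneg (s - 1/4), mul_pos hs ht]

lemma le_Fmax (x : Fin (4 * 3 ^ (2-1)) → ℝ) (i : Fin (4 * 3 ^ (2-1))) :
    fdisp 2 i x ≤ Fmax 2 x :=
  Finset.le_sup' (fun j => fdisp 2 j x) (Finset.mem_univ i)

lemma Fmax_le (x : Fin (4 * 3 ^ (2-1)) → ℝ) (c : ℝ) (h : ∀ i, fdisp 2 i x ≤ c) :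
    Fmax 2 x ≤ c :=
  Finset.sup'_le _ _ (fun i _ => h i)

set_option maxHeartbeats 4000000 in
lemma kl (x : Fin 12 → ℝ) (hp : ∀ i : Fin 12, 0 < x i) (hsum : ∑ i, x i = 1)
    (hf : ∀ i : Fin 12, fdisp 2 i x ≤ 33) : ∀ i : Fin 12, x i = 1/12 := by
  have htot : x 0 + x 1 + x 2 + x 3 + x 4 + x 5 + x 6 + x 7 + x 8 + x 9 + x 10 + x 11 = 1 := by
    rw [← sum12 x]; exact hsum
  have p1 : (0:ℝ) < x 0 + x 1 + x 2 := by have := hp 0; have := hp 1; have := hp 2; linarith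
  have p2 : (0:ℝ) < x 3 + x 4 + x 5 := by have := hp 3; have := hp 4; have := hp 5; linarith
  have p3 : (0:ℝ) < x 6 + x 7 + x 8 := by have := hp 6; have := hp 7; have := hp 8; linarith
  have p4 : (0:ℝ) < x 9 + x 10 + x 11 := by have := hp 9; have := hp 10; have := hp 11; linarith
  have e0 := hf 0
  rw [fdisp_eval_0] at e0
  have l0 := lb_aux _ _ p4 (hp 0) e0
  clear e0
  have e1 := hf 1
  rw [fdisp_eval_1] at e1
  have l1 := lb_aux _ _ p3 (hp 1) e1
  clear e1
  have e2 := hf 2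
  rw [fdisp_eval_2] at e2
  have l2 := lb_aux _ _ p2 (hp 2) e2
  clear e2
  have e3 := hf 3
  rw [fdisp_eval_3] at e3
  have l3 := lb_aux _ _ p1 (hp 3) e3
  clear e3
  have e4 := hf 4
  rw [fdisp_eval_4] at e4
  have l4 := lb_aux _ _ p4 (hp 4) e4
  clear e4
  have e5 := hf 5
  rw [fdisp_eval_5] at e5
  have l5 := lb_aux _ _ p3 (hp 5) e5
  clear e5
  have e6 := hf 6
  rw [fdisp_eval_6] at e6
  have l6 := lb_aux _ _ p2 (hp 6) e6
  clear e6
  have e7 := hf 7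
  rw [fdisp_eval_7] at e7
  have l7 := lb_aux _ _ p1 (hp 7) e7
  clear e7
  have e8 := hf 8
  rw [fdisp_eval_8] at e8
  have l8 := lb_aux _ _ p4 (hp 8) e8
  clear e8
  have e9 := hf 9
  rw [fdisp_eval_9] at e9
  have l9 := lb_aux _ _ p3 (hp 9) e9
  clear e9
  have e10 := hf 10
  rw [fdisp_eval_10] at e10
  have l10 := lb_aux _ _ p2 (hp 10) e10
  clear e10
  have e11 := hf 11
  rw [fdisp_eval_11] at e11
  have l11 := lb_aux _ _ p1 (hp 11) e11
  clear e11
  have q0 : x 0 = 1/12 := by linarith [l0, l1, l2, l3, l4, l5, l6, l7, l8, l9, l10, l11, htot]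
  have q1 : x 1 = 1/12 := by linarith [l0, l1, l2, l3, l4, l5, l6, l7, l8, l9, l10, l11, htot]
  have q2 : x 2 = 1/12 := by linarith [l0, l1, l2, l3, l4, l5, l6, l7, l8, l9, l10, l11, htot]
  have q3 : x 3 = 1/12 := by linarith [l0, l1, l2, l3, l4, l5, l6, l7, l8, l9, l10, l11, htot]
  have q4 : x 4 = 1/12 := by linarith [l0, l1, l2, l3, l4, l5, l6, l7, l8, l9, l10, l11, htot]
  have q5 : x 5 = 1/12 := by linarith [l0, l1, l2, l3, l4, l5, l6, l7, l8, l9, l10, l11, htot]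
  have q6 : x 6 = 1/12 := by linarith [l0, l1, l2, l3, l4, l5, l6, l7, l8, l9, l10, l11, htot]
  have q7 : x 7 = 1/12 := by linarith [l0, l1, l2, l3, l4, l5, l6, l7, l8, l9, l10, l11, htot]
  have q8 : x 8 = 1/12 := by linarith [l0, l1, l2, l3, l4, l5, l6, l7, l8, l9, l10, l11, htot]
  have q9 : x 9 = 1/12 := by linarith [l0, l1, l2, l3, l4, l5, l6, l7, l8, l9, l10, l11, htot]
  have q10 : x 10 = 1/12 := by linarith [l0, l1, l2, l3, l4, l5, l6, l7, l8, l9, l10, l11, htot]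
  have q11 : x 11 = 1/12 := by linarith [l0, l1, l2, l3, l4, l5, l6, l7, l8, l9, l10, l11, htot]
  intro i
  fin_cases i <;> [exact q0; exact q1; exact q2; exact q3; exact q4; exact q5; exact q6; exact q7; exact q8; exact q9; exact q10; exact q11]

lemma fdisp_const (i : Fin 12) : fdisp 2 i (fun _ => (1:ℝ)/12) = 33 := by
  have hsg4 : sg ((1:ℝ)/12 + 1/12 + 1/12) = 3 := by rw [sg]; norm_num
  have hsg12 : sg ((1:ℝ)/12) = 11 := by rw [sg]; norm_num
  have q0 : fdisp 2 (0 : Fin 12) (fun _ => (1:ℝ)/12) = 33 := by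
    rw [fdisp_eval_0, hsg4, hsg12]; norm_num
  have q1 : fdisp 2 (1 : Fin 12) (fun _ => (1:ℝ)/12) = 33 := by
    rw [fdisp_eval_1, hsg4, hsg12]; norm_num
  have q2 : fdisp 2 (2 : Fin 12) (fun _ => (1:ℝ)/12) = 33 := by
    rw [fdisp_eval_2, hsg4, hsg12]; norm_num
  have q3 : fdisp 2 (3 : Fin 12) (fun _ => (1:ℝ)/12) = 33 := by
    rw [fdisp_eval_3, hsg4, hsg12]; norm_num
  have q4 : fdisp 2 (4 : Fin 12) (fun _ => (1:ℝ)/12) = 33 := by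
    rw [fdisp_eval_4, hsg4, hsg12]; norm_num
  have q5 : fdisp 2 (5 : Fin 12) (fun _ => (1:ℝ)/12) = 33 := by
    rw [fdisp_eval_5, hsg4, hsg12]; norm_num
  have q6 : fdisp 2 (6 : Fin 12) (fun _ => (1:ℝ)/12) = 33 := by
    rw [fdisp_eval_6, hsg4, hsg12]; norm_num
  have q7 : fdisp 2 (7 : Fin 12) (fun _ => (1:ℝ)/12) = 33 := by
    rw [fdisp_eval_7, hsg4, hsg12]; norm_num
  have q8 : fdisp 2 (8 : Fin 12) (fun _ => (1:ℝ)/12) = 33 := by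
    rw [fdisp_eval_8, hsg4, hsg12]; norm_num
  have q9 : fdisp 2 (9 : Fin 12) (fun _ => (1:ℝ)/12) = 33 := by
    rw [fdisp_eval_9, hsg4, hsg12]; norm_num
  have q10 : fdisp 2 (10 : Fin 12) (fun _ => (1:ℝ)/12) = 33 := by
    rw [fdisp_eval_10, hsg4, hsg12]; norm_num
  have q11 : fdisp 2 (11 : Fin 12) (fun _ => (1:ℝ)/12) = 33 := by
    rw [fdisp_eval_11, hsg4, hsg12]; norm_num
  fin_cases i <;> [exact q0; exact q1; exact q2; exact q3; exact q4; exact q5; exact q6; exact q7; exact q8; exact q9; exact q10; exact q11]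

lemma Fmax_const : Fmax 2 (fun _ => (1:ℝ)/12) = 33 := by
  apply le_antisymm
  · exact Fmax_le _ _ (fun i => (fdisp_const i).le)
  · exact le_trans (fdisp_const (0 : Fin 12)).ge (le_Fmax _ ((0 : Fin 12)))

/-- For `k = 2` (`d = 12`): the minimum over the open simplex `Δ^{11}` of
`max_i f_i` equals `33`, attained uniquely at `x = (1/12,…,1/12)`. -/
theorem Fmax_min_k_two :
    (fun _ => (1 : ℝ) / 12) ∈ simplexPos 2 ∧
    Fmax 2 (fun _ => (1 : ℝ) / 12) = 33 ∧
    (∀ x ∈ simplexPos 2, 33 ≤ Fmax 2 x) ∧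
    (∀ x ∈ simplexPos 2, Fmax 2 x = 33 → x = fun _ => (1 : ℝ) / 12) := by
  have hmem : (fun _ => (1 : ℝ) / 12) ∈ simplexPos 2 := by
    refine ⟨fun i => by norm_num, ?_⟩
    have h12 : ∑ i : Fin 12, (fun _ : Fin 12 => (1:ℝ)/12) i = 1 := by
      rw [sum12 (fun _ => (1:ℝ)/12)]; norm_num
    exact h12
  have huniq : ∀ x ∈ simplexPos 2, (∀ i : Fin 12, fdisp 2 i x ≤ 33) →
      x = fun _ => (1 : ℝ) / 12 := by
    rintro x ⟨hp, hsx⟩ hf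
    funext i
    exact kl x (fun j => hp j) hsx hf i
  have hlow : ∀ x ∈ simplexPos 2, 33 ≤ Fmax 2 x := by
    intro x hx
    by_contra hlt
    push_neg at hlt
    have hf : ∀ i : Fin 12, fdisp 2 i x ≤ 33 :=
      fun i => le_of_lt (lt_of_le_of_lt (le_Fmax x i) hlt)
    have hxe := huniq x hx hf
    rw [hxe, Fmax_const] at hlt
    exact lt_irrefl _ hlt
  refine ⟨hmem, Fmax_const, hlow, ?_⟩
  intro x hx heq
  exact huniq x hx (fun i => heq ▸ le_Fmax x i)
end
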